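/- Let π_a : (0,1) → [0,∞) and π_v : (0,∞) → [0,∞) be measurable prior densities. Define C(v) = Σₖ cₖ(v)n₀ₖ/σ₀ₖ², Q(v) = exp{−(f(v)/(2C(v)))(Σₖ cₖ(v)Yₖ)²} · (f(v)C(v))^{1/2}, and R(v) = v^{−(K+1)/2} · Πₖ Nₖ(v)^{1/2} · A(v)^{−1/2} · exp{(Σₖ YₖNₖ(v))²/(2v²A(v))} · exp{(1/2)Σₖ Yₖ²Nₖ(v)}. Assume f is differentiable on (0,∞) with derivative f′ and that Q(v) · |f′(v)| · π_a(f(v)) = R(v) · π_v(v) for all v > 0. Define the BNPP normalizing constant c(v) = ∫_ℝ Πₖ exp{−(cₖ(v)f(v)/(2σ₀ₖ²))(S₀ₖ + n₀ₖ(ȳ₀ₖ − t)²)} dt, the BNPP marginal (expressed after the change of variables a₀ = f(v), with dataset-specific exponents hₖ(a₀) = cₖ(v)f(v)) g_BNPP(θ) = ∫_{(0,∞)} exp{−(n/(2σ²))(ȳ − θ)²} · Πₖ exp{−(cₖ(v)f(v)/(2σ₀ₖ²))(S₀ₖ + n₀ₖ(ȳ₀ₖ − θ)²)} · c(v)⁻¹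 · π_a(f(v)) · |f′(v)| dv, and the hierarchical-model marginal (improper uniform prior on μ) g_BHM(θ) = ∫_{(0,∞)} ∫_ℝ ∫_{ℝᴷ} v^{−(K+1)/2} exp{−(n/(2σ²))(ȳ − θ)² − (1/2)Σₖ (n₀ₖ/σ₀ₖ²)(ȳ₀ₖ − θ₀ₖ)² − (θ − μ)²/(2v) − (1/(2v))Σₖ(θ₀ₖ − μ)²} π_v(v) dθ₀ dμ dv. Assume g_BNPP(θ) and g_BHM(θ) are finite for every θ. Then there exists a constant C > 0, not depending on θ, such that g_BNPP(θ) = C · g_BHM(θ) for all θ ∈ ℝ. -/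

import Mathlib

/-!
Fix `v > 0` and put `Hₖ = cₖ(v) n₀ₖ / σ₀ₖ²`, `m` the `H`-weighted mean of the `ȳ₀ₖ` and
`C(v) = Σₖ Hₖ`. As functions of `θ`, both integrands are multiples of the same Gaussian kernel
`exp (-(f C / 2) (θ - m)²)`: for the BNPP this is the normalised product of the power-prior
likelihoods, for the BHM it comes out of integrating `θ₀` and then `μ` against Gaussians, since
integrating out a Gaussian in a shared location variable turns the precisions `α, β` into
`α β / (α + β)`. The remaining `v`-dependent factors are `π_a(f) |f'|` and an explicit multiple of
`π_v`; the matching condition says exactly that they agree up to the factor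
`(2π)^{-(K+2)/2} exp (½ Σₖ n₀ₖ ȳ₀ₖ² / σ₀ₖ²)`, so the integrands are proportional pointwise in `v`.
-/

open MeasureTheory Real Set

theorem integral_exp_neg_mul_sub_sq (p m : ℝ) :
    ∫ t : ℝ, exp (-p * (t - m) ^ 2) = √(π / p) := by
  rw [integral_sub_right_eq_self (fun t => exp (-p * t ^ 2)) m, integral_gaussian]

theorem integral_exp_neg_mul_sq_sub_mul_sq (α β x z : ℝ) (hα : 0 < α) (hβ : 0 < β) :
    ∫ t : ℝ, exp (-(α / 2) * (x - t) ^ 2 - (β / 2) * (t - z) ^ 2) =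
      √(2 * π / (α + β)) * exp (-(α * β / (α + β)) / 2 * (x - z) ^ 2) := by
  have hαβ : α + β ≠ 0 := by positivity
  have key : ∀ t, -(α / 2) * (x - t) ^ 2 - (β / 2) * (t - z) ^ 2 =
      -((α + β) / 2) * (t - (α * x + β * z) / (α + β)) ^ 2 +
        -(α * β / (α + β)) / 2 * (x - z) ^ 2 := fun t => by
    field_simp; ring
  simp_rw [key, exp_add]
  rw [integral_mul_const, integral_exp_neg_mul_sub_sq]
  congr 2
  field_simp

section WeightedSquares

variable {ι : Type*} [Fintype ι]

theorem sum_mul_eq_sum_mul_centerMass (h y : ι → ℝ) (hh : ∑ k, h k ≠ 0) :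
    ∑ k, h k * y k = (∑ k, h k) * Finset.univ.centerMass h y := by
  simp only [Finset.centerMass, smul_eq_mul]
  field_simp

theorem sum_mul_sub_sq_eq (h y : ι → ℝ) (hh : ∑ k, h k ≠ 0) (t : ℝ) :
    ∑ k, h k * (y k - t) ^ 2 =
      (∑ k, h k) * (t - Finset.univ.centerMass h y) ^ 2 +
        ∑ k, h k * (y k - Finset.univ.centerMass h y) ^ 2 := by
  have expand : ∀ s, ∑ k, h k * (y k - s) ^ 2 =
      ∑ k, h k * y k ^ 2 - 2 * s * ∑ k, h k * y k + (∑ k, h k) * s ^ 2 := fun s => by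
    simp only [Finset.mul_sum, Finset.sum_mul, ← Finset.sum_sub_distrib, ← Finset.sum_add_distrib]
    exact Finset.sum_congr rfl fun k _ => by ring
  rw [expand, expand, sum_mul_eq_sum_mul_centerMass h y hh]
  ring

theorem prod_exp_div_integral_prod_exp (s : ℝ) (z h y : ι → ℝ) (hP : 0 < s * ∑ k, h k)
    (θ : ℝ) :
    (∏ k, exp (-(s / 2) * (z k + h k * (y k - θ) ^ 2))) /
        ∫ t, ∏ k, exp (-(s / 2) * (z k + h k * (y k - t) ^ 2)) =
      √((s * ∑ k, h k) / (2 * π)) *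
        exp (-((s * ∑ k, h k) / 2) * (θ - Finset.univ.centerMass h y) ^ 2) := by
  have hh : ∑ k, h k ≠ 0 := by rintro h0; simp [h0] at hP
  have hfactor : ∀ t, ∏ k, exp (-(s / 2) * (z k + h k * (y k - t) ^ 2)) =
      exp (-(s / 2) * ∑ k, (z k + h k * (y k - Finset.univ.centerMass h y) ^ 2)) *
        exp (-((s * ∑ k, h k) / 2) * (t - Finset.univ.centerMass h y) ^ 2) := fun t => by
    rw [← exp_sum, ← exp_add, ← Finset.mul_sum, Finset.sum_add_distrib, Finset.sum_add_distrib,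
      sum_mul_sub_sq_eq h y hh t]
    ring_nf
  simp_rw [hfactor]
  rw [integral_const_mul, integral_exp_neg_mul_sub_sq, mul_div_mul_left _ _ (exp_pos _).ne',
    div_eq_inv_mul, ← sqrt_inv, inv_div]
  congr 2
  ring

theorem integral_pi_exp_neg_sum_sq (α x : ι → ℝ) (β z : ℝ) (hα : ∀ k, 0 < α k) (hβ : 0 < β) :
    ∫ θ : ι → ℝ, exp (-(1 / 2) * ∑ k, α k * (x k - θ k) ^ 2 - (β / 2) * ∑ k, (θ k - z) ^ 2) =
      (∏ k, √(2 * π / (α k + β))) *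
        exp (-(1 / 2) * ∑ k, α k * β / (α k + β) * (x k - z) ^ 2) := by
  have hsplit : ∀ θ : ι → ℝ,
      exp (-(1 / 2) * ∑ k, α k * (x k - θ k) ^ 2 - (β / 2) * ∑ k, (θ k - z) ^ 2) =
        ∏ k, exp (-(α k / 2) * (x k - θ k) ^ 2 - (β / 2) * (θ k - z) ^ 2) := fun θ => by
    rw [← exp_sum]
    congr 1
    simp only [Finset.mul_sum, ← Finset.sum_sub_distrib]
    exact Finset.sum_congr rfl fun k _ => by ring
  simp_rw [hsplit]
  rw [integral_fintype_prod_volume_eq_prod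
      (fun k t => exp (-(α k / 2) * (x k - t) ^ 2 - (β / 2) * (t - z) ^ 2)),
    Finset.prod_congr rfl fun k _ => integral_exp_neg_mul_sq_sub_mul_sq _ _ (x k) z (hα k) hβ,
    Finset.prod_mul_distrib, ← exp_sum, Finset.mul_sum]
  congr 2
  exact Finset.sum_congr rfl fun k _ => by ring

theorem integral_integral_exp_hierarchical [Nonempty ι] (α x : ι → ℝ) (β θ : ℝ)
    (hα : ∀ k, 0 < α k) (hβ : 0 < β) (h : ι → ℝ) (hh : ∀ k, h k = α k * β / (α k + β)) :
    ∫ μ, ∫ θ₀ : ι → ℝ, exp (-(1 / 2) * ∑ k, α k * (x k - θ₀ k) ^ 2 - (β / 2) * (θ - μ) ^ 2 -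
        (β / 2) * ∑ k, (θ₀ k - μ) ^ 2) =
      (∏ k, √(2 * π / (α k + β))) * √(2 * π / (β + ∑ k, h k)) *
        exp (-(1 / 2) * ∑ k, h k * (x k - Finset.univ.centerMass h x) ^ 2) *
        exp (-(β * (∑ k, h k) / (β + ∑ k, h k)) / 2 * (θ - Finset.univ.centerMass h x) ^ 2) := by
  have hpos : 0 < ∑ k, h k :=
    Finset.sum_pos (fun k _ => hh k ▸ by have := hα k; positivity) Finset.univ_nonempty
  have inner : ∀ μ, ∫ θ₀ : ι → ℝ, exp (-(1 / 2) * ∑ k, α k * (x k - θ₀ k) ^ 2 -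
        (β / 2) * (θ - μ) ^ 2 - (β / 2) * ∑ k, (θ₀ k - μ) ^ 2) =
      (∏ k, √(2 * π / (α k + β))) *
        exp (-(1 / 2) * ∑ k, h k * (x k - Finset.univ.centerMass h x) ^ 2) *
        exp (-(β / 2) * (θ - μ) ^ 2 - ((∑ k, h k) / 2) * (μ - Finset.univ.centerMass h x) ^ 2) :=
      fun μ => by
    simp_rw [sub_right_comm _ ((β / 2) * (θ - μ) ^ 2), sub_eq_add_neg _ ((β / 2) * (θ - μ) ^ 2),
      exp_add]
    rw [integral_mul_const, integral_pi_exp_neg_sum_sq α x β μ hα hβ]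
    simp_rw [← hh]
    rw [sum_mul_sub_sq_eq h x hpos.ne', mul_assoc, mul_assoc, ← exp_add, ← exp_add]
    congr 2
    ring
  simp_rw [inner]
  rw [integral_const_mul, integral_exp_neg_mul_sq_sub_mul_sq β _ θ _ hβ hpos]
  ring

end WeightedSquares

section Model

/- `c`, `N`, `f`, `Cf` stand for the values `cₖ(v)`, `Nₖ(v)`, `f(v)`, `C(v)` at a fixed `v > 0`,
and `H k = c k * n0 k / σ02 k = n0 k / (σ02 k + n0 k v)` is the precision of dataset `k` after
shrinkage. -/

variable {K : ℕ} {σ02 n0 c N H : Fin K → ℝ} {v f Cf : ℝ}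

theorem shrinkage_eq_one_sub (hσ02 : ∀ k, 0 < σ02 k) (hn0 : ∀ k, 0 < n0 k) (hv : 0 < v)
    (hc : ∀ k, c k = (1 + n0 k * v / σ02 k)⁻¹) (hH : ∀ k, H k = c k * n0 k / σ02 k) (k : Fin K) :
    c k = 1 - v * H k := by
  have := hσ02 k; have := hn0 k
  rw [hH, hc]
  field_simp
  ring

theorem var_eq_mul_shrinkage (hσ02 : ∀ k, 0 < σ02 k) (hv : 0 < v)
    (hc : ∀ k, c k = (1 + n0 k * v / σ02 k)⁻¹) (hN : ∀ k, N k = (n0 k / σ02 k + 1 / v)⁻¹)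
    (k : Fin K) : N k = v * c k := by
  have := hσ02 k
  rw [hN, hc, ← one_div, ← one_div]
  field_simp
  ring

theorem discount_eq_inv_one_add (hσ02 : ∀ k, 0 < σ02 k) (hv : 0 < v)
    (hc : ∀ k, c k = (1 + n0 k * v / σ02 k)⁻¹) (hN : ∀ k, N k = (n0 k / σ02 k + 1 / v)⁻¹)
    (hH : ∀ k, H k = c k * n0 k / σ02 k) (hCf : Cf = ∑ k, H k)
    (hf : f = (1 + ∑ k, n0 k / σ02 k * N k)⁻¹) :
    f = (1 + v * Cf)⁻¹ := by
  rw [hf, hCf, Finset.mul_sum]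
  congr 2
  exact Finset.sum_congr rfl fun k _ => by rw [var_eq_mul_shrinkage hσ02 hv hc hN, hH]; ring

theorem A_eq_inv (hσ02 : ∀ k, 0 < σ02 k) (hn0 : ∀ k, 0 < n0 k) (hv : 0 < v)
    (hc : ∀ k, c k = (1 + n0 k * v / σ02 k)⁻¹) (hN : ∀ k, N k = (n0 k / σ02 k + 1 / v)⁻¹)
    (hH : ∀ k, H k = c k * n0 k / σ02 k) (hCf : Cf = ∑ k, H k)
    (hf : f = (1 + ∑ k, n0 k / σ02 k * N k)⁻¹) :
    (1 + K) / v - (∑ k, N k) / v ^ 2 = (v * f)⁻¹ := by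
  have hsum : ∑ k, N k = v * (K - v * Cf) := by
    calc ∑ k, N k = ∑ k, (v - v * (v * H k)) :=
          Finset.sum_congr rfl fun k _ => by
            rw [var_eq_mul_shrinkage hσ02 hv hc hN]
            linear_combination v * shrinkage_eq_one_sub hσ02 hn0 hv hc hH k
      _ = v * (K - v * Cf) := by
          rw [Finset.sum_sub_distrib, ← Finset.mul_sum, ← Finset.mul_sum, ← hCf]; simp; ring
  rw [discount_eq_inv_one_add hσ02 hv hc hN hH hCf hf, hsum]
  field_simp
  ring

theorem prod_exp_mul_inv_integral_eq_gaussian (hH : ∀ k, H k = c k * n0 k / σ02 k)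
    (hCf : Cf = ∑ k, H k) (hP : 0 < f * Cf) (S0 y : Fin K → ℝ) (θ : ℝ) :
    (∏ k, exp (-(c k * f / (2 * σ02 k)) * (S0 k + n0 k * (y k - θ) ^ 2))) *
        (∫ t, ∏ k, exp (-(c k * f / (2 * σ02 k)) * (S0 k + n0 k * (y k - t) ^ 2)))⁻¹ =
      √(f * Cf / (2 * π)) * exp (-(f * Cf / 2) * (θ - Finset.univ.centerMass H y) ^ 2) := by
  have hfactor : ∀ t, ∏ k, exp (-(c k * f / (2 * σ02 k)) * (S0 k + n0 k * (y k - t) ^ 2)) =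
      ∏ k, exp (-(f / 2) * (c k * S0 k / σ02 k + H k * (y k - t) ^ 2)) := fun t =>
    Finset.prod_congr rfl fun k _ => by rw [hH]; ring_nf
  simp_rw [hfactor, ← div_eq_mul_inv]
  rw [hCf] at hP ⊢
  exact prod_exp_div_integral_prod_exp f _ H y hP θ

theorem sum_shrunk_precision_pos [Nonempty (Fin K)] (hσ02 : ∀ k, 0 < σ02 k)
    (hn0 : ∀ k, 0 < n0 k) (hv : 0 < v) (hc : ∀ k, c k = (1 + n0 k * v / σ02 k)⁻¹)
    (hH : ∀ k, H k = c k * n0 k / σ02 k)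
    (hCf : Cf = ∑ k, H k) : 0 < Cf :=
  hCf ▸ Finset.sum_pos (fun k _ => by
    have := hσ02 k; have := hn0 k
    rw [hH, hc]; positivity) Finset.univ_nonempty

theorem integral_integral_bhm_eq [Nonempty (Fin K)] (hσ02 : ∀ k, 0 < σ02 k)
    (hn0 : ∀ k, 0 < n0 k) (hv : 0 < v) (hc : ∀ k, c k = (1 + n0 k * v / σ02 k)⁻¹)
    (hN : ∀ k, N k = (n0 k / σ02 k + 1 / v)⁻¹) (hH : ∀ k, H k = c k * n0 k / σ02 k)
    (hCf : Cf = ∑ k, H k) (hf : f = (1 + ∑ k, n0 k / σ02 k * N k)⁻¹) (y : Fin K → ℝ)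
    (w a p θ : ℝ) :
    ∫ μ, ∫ θ₀ : Fin K → ℝ, w * exp (a - (1 / 2) * ∑ k, (n0 k / σ02 k) * (y k - θ₀ k) ^ 2 -
        (θ - μ) ^ 2 / (2 * v) - (1 / (2 * v)) * ∑ k, (θ₀ k - μ) ^ 2) * p =
      w * exp a * p * (√(2 * π) ^ (K + 1) * (∏ k, √(N k)) * √(v * f) *
        exp (-(1 / 2) * ∑ k, H k * (y k - Finset.univ.centerMass H y) ^ 2) *
        exp (-(f * Cf / 2) * (θ - Finset.univ.centerMass H y) ^ 2)) := by
  have hα : ∀ k, 0 < n0 k / σ02 k := fun k => div_pos (hn0 k) (hσ02 k)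
  have hβ : 0 < 1 / v := one_div_pos.mpr hv
  have h2π : 0 ≤ 2 * π := by positivity
  have hHα : ∀ k, H k = n0 k / σ02 k * (1 / v) / (n0 k / σ02 k + 1 / v) := fun k => by
    have := hσ02 k
    rw [hH, hc]
    field_simp
    ring
  have hsplit : ∀ μ (θ₀ : Fin K → ℝ),
      w * exp (a - (1 / 2) * ∑ k, (n0 k / σ02 k) * (y k - θ₀ k) ^ 2 -
        (θ - μ) ^ 2 / (2 * v) - (1 / (2 * v)) * ∑ k, (θ₀ k - μ) ^ 2) * p =
      w * exp a * p * exp (-(1 / 2) * ∑ k, n0 k / σ02 k * (y k - θ₀ k) ^ 2 -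
        (1 / v / 2) * (θ - μ) ^ 2 - (1 / v / 2) * ∑ k, (θ₀ k - μ) ^ 2) := fun μ θ₀ => by
    rw [mul_right_comm w (exp a), mul_assoc (w * p), ← exp_add, mul_right_comm w]
    congr 2
    ring
  simp_rw [hsplit, integral_const_mul]
  rw [integral_integral_exp_hierarchical _ y _ θ hα hβ H hHα, ← hCf]
  have hf' := discount_eq_inv_one_add hσ02 hv hc hN hH hCf hf
  have hprod : ∏ k, √(2 * π / (n0 k / σ02 k + 1 / v)) = √(2 * π) ^ K * ∏ k, √(N k) := by
    simp_rw [div_eq_mul_inv (2 * π), ← hN, sqrt_mul h2π, Finset.prod_mul_distrib,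
      Finset.prod_const, Finset.card_univ, Fintype.card_fin]
  have hvar : √(2 * π / (1 / v + Cf)) = √(2 * π) * √(v * f) := by
    rw [← sqrt_mul h2π, hf']
    congr 1
    field_simp
  have hprec : -(1 / v * Cf / (1 / v + Cf)) / 2 = -(f * Cf / 2) := by
    rw [hf']
    field_simp
  rw [hprod, hvar, hprec]
  ring

theorem inv_Q_mul_R_eq [Nonempty (Fin K)] (hσ02 : ∀ k, 0 < σ02 k) (hn0 : ∀ k, 0 < n0 k)
    (hv : 0 < v) (hc : ∀ k, c k = (1 + n0 k * v / σ02 k)⁻¹)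
    (hN : ∀ k, N k = (n0 k / σ02 k + 1 / v)⁻¹) (hH : ∀ k, H k = c k * n0 k / σ02 k)
    (hCf : Cf = ∑ k, H k) (hf : f = (1 + ∑ k, n0 k / σ02 k * N k)⁻¹) {y Y : Fin K → ℝ}
    (hY : ∀ k, Y k = n0 k * y k / σ02 k) {A Q R : ℝ} (hA : A = (1 + K) / v - (∑ k, N k) / v ^ 2)
    (hQ : Q = exp (-(f / (2 * Cf)) * (∑ k, c k * Y k) ^ 2) * √(f * Cf))
    (hR : R = v ^ (-(((K : ℝ) + 1) / 2)) * (∏ k, √(N k)) * (√A)⁻¹ *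
      exp ((∑ k, Y k * N k) ^ 2 / (2 * v ^ 2 * A)) * exp ((1 / 2) * ∑ k, Y k ^ 2 * N k)) :
    Q⁻¹ * R = (√(f * Cf))⁻¹ * (v ^ (-(((K : ℝ) + 1) / 2)) * (∏ k, √(N k)) * √(v * f) *
      exp ((1 / 2) * ∑ k, n0 k / σ02 k * y k ^ 2) *
      exp (-(1 / 2) * ∑ k, H k * (y k - Finset.univ.centerMass H y) ^ 2)) := by
  set m := Finset.univ.centerMass H y
  have hCf0 : 0 < Cf := sum_shrunk_precision_pos hσ02 hn0 hv hc hH hCf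
  have hf' := discount_eq_inv_one_add hσ02 hv hc hN hH hCf hf
  have hcY : ∑ k, c k * Y k = Cf * m := by
    rw [hCf, ← sum_mul_eq_sum_mul_centerMass H y (hCf ▸ hCf0.ne')]
    exact Finset.sum_congr rfl fun k _ => by rw [hY, hH]; ring
  have hYN : ∑ k, Y k * N k = v * (Cf * m) := by
    rw [← hcY, Finset.mul_sum]
    exact Finset.sum_congr rfl fun k _ => by rw [var_eq_mul_shrinkage hσ02 hv hc hN]; ring
  have hY2N : ∑ k, Y k ^ 2 * N k =
      ∑ k, n0 k / σ02 k * y k ^ 2 - (Cf * m ^ 2 + ∑ k, H k * (y k - m) ^ 2) := by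
    have hHy2 : ∑ k, H k * y k ^ 2 = Cf * m ^ 2 + ∑ k, H k * (y k - m) ^ 2 := by
      rw [hCf]
      simpa using sum_mul_sub_sq_eq H y (hCf ▸ hCf0.ne') 0
    rw [← hHy2, ← Finset.sum_sub_distrib]
    exact Finset.sum_congr rfl fun k _ => by
      have := hσ02 k; have := hn0 k
      rw [hY, var_eq_mul_shrinkage hσ02 hv hc hN, hH, hc]
      field_simp
      ring
  -- the exponents agree because `f (1 + v Cf) = 1`
  have hexp : exp ((v * (Cf * m)) ^ 2 / (2 * v ^ 2 * (v * f)⁻¹)) *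
        exp ((1 / 2) * (∑ k, n0 k / σ02 k * y k ^ 2 - (Cf * m ^ 2 + ∑ k, H k * (y k - m) ^ 2))) =
      exp (-(f / (2 * Cf)) * (Cf * m) ^ 2) *
        (exp ((1 / 2) * ∑ k, n0 k / σ02 k * y k ^ 2) *
          exp (-(1 / 2) * ∑ k, H k * (y k - m) ^ 2)) := by
    rw [← exp_add, ← exp_add, ← exp_add, hf']
    congr 1
    field_simp
    ring
  rw [hQ, hR, hcY, hYN, hY2N, hA, A_eq_inv hσ02 hn0 hv hc hN hH hCf hf, sqrt_inv, inv_inv,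
    mul_assoc _ (exp _), hexp]
  field_simp

end Model

theorem stmt_2_general (K : ℕ) (hK : 1 ≤ K)
    (σ2 n : ℝ) (ybar : ℝ)
    (σ02 n0 ybar0 S0 : Fin K → ℝ)
    (hσ02 : ∀ k, 0 < σ02 k) (hn0 : ∀ k, 0 < n0 k)
    (N : ℝ → Fin K → ℝ)
    (hN : ∀ v > (0 : ℝ), ∀ k, N v k = (n0 k / σ02 k + 1 / v)⁻¹)
    (ck : ℝ → Fin K → ℝ)
    (hck : ∀ v > (0 : ℝ), ∀ k, ck v k = (1 + n0 k * v / σ02 k)⁻¹)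
    (f : ℝ → ℝ)
    (hfdef : ∀ v > (0 : ℝ), f v = (1 + ∑ k, (n0 k / σ02 k) * N v k)⁻¹)
    (Y : Fin K → ℝ) (hY : ∀ k, Y k = n0 k * ybar0 k / σ02 k)
    (A : ℝ → ℝ)
    (hA : ∀ v > (0 : ℝ), A v = (1 + K) / v - (∑ k, N v k) / v ^ 2)
    (πa πv : ℝ → ℝ)
    (Cf Q R : ℝ → ℝ)
    (hCf : ∀ v > (0 : ℝ), Cf v = ∑ k, ck v k * n0 k / σ02 k)
    (hQ : ∀ v > (0 : ℝ), Q v =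
      Real.exp (-(f v / (2 * Cf v)) * (∑ k, ck v k * Y k) ^ 2) * Real.sqrt (f v * Cf v))
    (hR : ∀ v > (0 : ℝ), R v =
      v ^ (-(((K : ℝ) + 1) / 2)) * (∏ k, Real.sqrt (N v k)) * (Real.sqrt (A v))⁻¹ *
        Real.exp ((∑ k, Y k * N v k) ^ 2 / (2 * v ^ 2 * A v)) *
        Real.exp ((1 / 2) * ∑ k, Y k ^ 2 * N v k))
    (f' : ℝ → ℝ)
    (hmatch : ∀ v > (0 : ℝ), Q v * |f' v| * πa (f v) = R v * πv v)
    (cnorm : ℝ → ℝ)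
    (hcnorm : ∀ v > (0 : ℝ), cnorm v = ∫ t : ℝ,
      ∏ k, Real.exp (-(ck v k * f v / (2 * σ02 k)) * (S0 k + n0 k * (ybar0 k - t) ^ 2)))
    (gBNPP gBHM : ℝ → ℝ)
    (hgBNPP : ∀ θ, gBNPP θ = ∫ v in Ioi (0 : ℝ),
        Real.exp (-(n / (2 * σ2)) * (ybar - θ) ^ 2) *
          (∏ k, Real.exp (-(ck v k * f v / (2 * σ02 k)) *
            (S0 k + n0 k * (ybar0 k - θ) ^ 2))) *
          (cnorm v)⁻¹ * πa (f v) * |f' v|)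
    (hgBHM : ∀ θ, gBHM θ = ∫ v in Ioi (0 : ℝ), ∫ μ : ℝ, ∫ θ0 : Fin K → ℝ,
        v ^ (-(((K : ℝ) + 1) / 2)) *
          Real.exp (-(n / (2 * σ2)) * (ybar - θ) ^ 2 -
            (1 / 2) * ∑ k, (n0 k / σ02 k) * (ybar0 k - θ0 k) ^ 2 -
            (θ - μ) ^ 2 / (2 * v) - (1 / (2 * v)) * ∑ k, (θ0 k - μ) ^ 2) * πv v) :
    ∃ C : ℝ, 0 < C ∧ ∀ θ : ℝ, gBNPP θ = C * gBHM θ := by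
  have : Nonempty (Fin K) := ⟨⟨0, hK⟩⟩
  refine ⟨(√(2 * π))⁻¹ ^ (K + 2) * exp ((1 / 2) * ∑ k, n0 k / σ02 k * ybar0 k ^ 2),
    by positivity, fun θ => ?_⟩
  rw [hgBNPP θ, hgBHM θ, ← integral_const_mul]
  refine setIntegral_congr_fun measurableSet_Ioi fun v (hv : 0 < v) => ?_
  set H : Fin K → ℝ := fun k => ck v k * n0 k / σ02 k
  have hH : ∀ k, H k = ck v k * n0 k / σ02 k := fun _ => rfl
  have hCfpos := sum_shrunk_precision_pos hσ02 hn0 hv (hck v hv) hH (hCf v hv)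
  have hfpos : 0 < f v := by
    rw [discount_eq_inv_one_add hσ02 hv (hck v hv) (hN v hv) hH (hCf v hv) (hfdef v hv)]
    positivity
  have hlik :=
    prod_exp_mul_inv_integral_eq_gaussian hH (hCf v hv) (mul_pos hfpos hCfpos) S0 ybar0 θ
  rw [← hcnorm v hv] at hlik
  have hQpos : 0 < Q v := by rw [hQ v hv]; have := mul_pos hfpos hCfpos; positivity
  have hprior : πa (f v) * |f' v| = (Q v)⁻¹ * R v * πv v := by
    rw [mul_assoc, ← hmatch v hv]
    field_simp
  rw [integral_integral_bhm_eq hσ02 hn0 hv (hck v hv) (hN v hv) hH (hCf v hv) (hfdef v hv),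
    mul_assoc (exp _), hlik, mul_assoc, hprior,
    inv_Q_mul_R_eq hσ02 hn0 hv (hck v hv) (hN v hv) hH (hCf v hv) (hfdef v hv) hY (hA v hv)
      (hQ v hv) (hR v hv), sqrt_div (mul_pos hfpos hCfpos).le, inv_pow]
  have : √(2 * π) ≠ 0 := by positivity
  field_simp
  ring

/-- if the priors `π_a` (on the global discounting parameter, via the change
of variables `a₀ = f(v)`) and `π_v` (on the BHM variance) satisfy the matching condition
`Q(v)·|f′(v)|·π_a(f(v)) = R(v)·π_v(v)`, then the marginal posterior of `θ` under the
BHM-matching normalized power prior (BNPP) is proportional to the marginal posterior of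
`θ` under the `K`-dataset Bayesian hierarchical model. -/
theorem stmt_2 (K : ℕ) (hK : 1 ≤ K)
    (σ2 n : ℝ) (hσ2 : 0 < σ2) (hn : 0 < n) (ybar : ℝ)
    (σ02 n0 ybar0 S0 : Fin K → ℝ)
    (hσ02 : ∀ k, 0 < σ02 k) (hn0 : ∀ k, 0 < n0 k) (hS0 : ∀ k, 0 ≤ S0 k)
    (N : ℝ → Fin K → ℝ)
    (hN : ∀ v > (0 : ℝ), ∀ k, N v k = (n0 k / σ02 k + 1 / v)⁻¹)
    (ck : ℝ → Fin K → ℝ)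
    (hck : ∀ v > (0 : ℝ), ∀ k, ck v k = (1 + n0 k * v / σ02 k)⁻¹)
    (f : ℝ → ℝ)
    (hfdef : ∀ v > (0 : ℝ), f v = (1 + ∑ k, (n0 k / σ02 k) * N v k)⁻¹)
    (Y : Fin K → ℝ) (hY : ∀ k, Y k = n0 k * ybar0 k / σ02 k)
    (A : ℝ → ℝ)
    (hA : ∀ v > (0 : ℝ), A v = (1 + K) / v - (∑ k, N v k) / v ^ 2)
    (πa πv : ℝ → ℝ) (hπa_meas : Measurable πa) (hπv_meas : Measurable πv)
    (hπa_nonneg : ∀ a ∈ Ioo (0 : ℝ) 1, 0 ≤ πa a)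
    (hπv_nonneg : ∀ v ∈ Ioi (0 : ℝ), 0 ≤ πv v)
    (Cf Q R : ℝ → ℝ)
    (hCf : ∀ v > (0 : ℝ), Cf v = ∑ k, ck v k * n0 k / σ02 k)
    (hQ : ∀ v > (0 : ℝ), Q v =
      Real.exp (-(f v / (2 * Cf v)) * (∑ k, ck v k * Y k) ^ 2) * Real.sqrt (f v * Cf v))
    (hR : ∀ v > (0 : ℝ), R v =
      v ^ (-(((K : ℝ) + 1) / 2)) * (∏ k, Real.sqrt (N v k)) * (Real.sqrt (A v))⁻¹ *
        Real.exp ((∑ k, Y k * N v k) ^ 2 / (2 * v ^ 2 * A v)) *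
        Real.exp ((1 / 2) * ∑ k, Y k ^ 2 * N v k))
    (f' : ℝ → ℝ) (hf' : ∀ v > (0 : ℝ), HasDerivAt f (f' v) v)
    (hmatch : ∀ v > (0 : ℝ), Q v * |f' v| * πa (f v) = R v * πv v)
    (cnorm : ℝ → ℝ)
    (hcnorm : ∀ v > (0 : ℝ), cnorm v = ∫ t : ℝ,
      ∏ k, Real.exp (-(ck v k * f v / (2 * σ02 k)) * (S0 k + n0 k * (ybar0 k - t) ^ 2)))
    (gBNPP gBHM : ℝ → ℝ)
    (hgBNPP : ∀ θ, gBNPP θ = ∫ v in Ioi (0 : ℝ),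
        Real.exp (-(n / (2 * σ2)) * (ybar - θ) ^ 2) *
          (∏ k, Real.exp (-(ck v k * f v / (2 * σ02 k)) *
            (S0 k + n0 k * (ybar0 k - θ) ^ 2))) *
          (cnorm v)⁻¹ * πa (f v) * |f' v|)
    (hgBHM : ∀ θ, gBHM θ = ∫ v in Ioi (0 : ℝ), ∫ μ : ℝ, ∫ θ0 : Fin K → ℝ,
        v ^ (-(((K : ℝ) + 1) / 2)) *
          Real.exp (-(n / (2 * σ2)) * (ybar - θ) ^ 2 -
            (1 / 2) * ∑ k, (n0 k / σ02 k) * (ybar0 k - θ0 k) ^ 2 -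
            (θ - μ) ^ 2 / (2 * v) - (1 / (2 * v)) * ∑ k, (θ0 k - μ) ^ 2) * πv v)
    (hBNPP_fin : ∀ θ : ℝ, IntegrableOn (fun v =>
        Real.exp (-(n / (2 * σ2)) * (ybar - θ) ^ 2) *
          (∏ k, Real.exp (-(ck v k * f v / (2 * σ02 k)) *
            (S0 k + n0 k * (ybar0 k - θ) ^ 2))) *
          (cnorm v)⁻¹ * πa (f v) * |f' v|) (Ioi (0 : ℝ)))
    (hBHM_fin : ∀ θ : ℝ, IntegrableOn (fun v => ∫ μ : ℝ, ∫ θ0 : Fin K → ℝ,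
        v ^ (-(((K : ℝ) + 1) / 2)) *
          Real.exp (-(n / (2 * σ2)) * (ybar - θ) ^ 2 -
            (1 / 2) * ∑ k, (n0 k / σ02 k) * (ybar0 k - θ0 k) ^ 2 -
            (θ - μ) ^ 2 / (2 * v) - (1 / (2 * v)) * ∑ k, (θ0 k - μ) ^ 2) * πv v)
        (Ioi (0 : ℝ))) :
    ∃ C : ℝ, 0 < C ∧ ∀ θ : ℝ, gBNPP θ = C * gBHM θ :=
  stmt_2_general K hK σ2 n ybar σ02 n0 ybar0 S0 hσ02 hn0 N hN ck hck f hfdef Y hY A hA πa πv Cf Q R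
    hCf hQ hR f' hmatch cnorm hcnorm gBNPP gBHM hgBNPP hgBHM
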